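/- Weighted integral estimate for the cut-off gain kernel (core of the second estimate of Lemma 2.3): Let -3 < γ < 0, β ≥ 0, ϑ ≥ 0 and 0 < q < s₀ < 1. There exists ε₀ > 0 such that for every ε ∈ (0, ε₀] there is a constant C > 0 with, for all t ≥ 0 and all v ∈ ℝ³: w_{q,ϑ,β}(v,t) ∫_{ℝ³} |v-u|^{-1} exp(-(s₀/8)|v-u|² - (s₀/8)(|v|²-|u|²)²/|v-u|²) e^{ε|v-u|²} (w_{q,ϑ,β}(u,t))^{-1} du ≤ C (1+|v|)^{-1}. -/

import Mathlib

noncomputable section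

open MeasureTheory Real
open scoped ENNReal

/-- Velocity space `ℝ³`. -/
abbrev V3 : Type := EuclideanSpace ℝ (Fin 3)

/-- The spatial torus `𝕋³`. -/
abbrev T3 : Type := Fin 3 → AddCircle (1 : ℝ)

/-- The global Maxwellian `μ(v) = (2π)^{-3/2} e^{-|v|²/2}`. -/
def gMaxw (v : V3) : ℝ := (2 * π) ^ (-(3 : ℝ) / 2) * Real.exp (-‖v‖ ^ 2 / 2)

/-- Real inner product on `ℝ³`. -/
def rinner (x y : V3) : ℝ := inner ℝ x y

/-- Post-collisional velocity `u' = u + ((v-u)·ω) ω`. -/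
def uPost (u v ω : V3) : V3 := u + rinner (v - u) ω • ω

/-- Post-collisional velocity `v' = v - ((v-u)·ω) ω`. -/
def vPost (u v ω : V3) : V3 := v - rinner (v - u) ω • ω

/-- The cosine `cos θ = (v-u)·ω/|v-u|`. -/
def cosAngle (u v ω : V3) : ℝ := rinner (v - u) ω / ‖v - u‖

/-- Surface measure on the unit sphere `S² ⊆ ℝ³`. -/
def sphMeasure : Measure (Metric.sphere (0 : V3) 1) := (volume : Measure V3).toSphere

/-- The soft potential collision kernel `B(v-u,ω) = |v-u|^γ q₀(cos θ)`. -/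
def Bker (γ : ℝ) (q₀ : ℝ → ℝ) (u v ω : V3) : ℝ := ‖v - u‖ ^ γ * q₀ (cosAngle u v ω)

/-- The collision frequency `ν(v)`. -/
def nuColl (γ : ℝ) (q₀ : ℝ → ℝ) (v : V3) : ℝ :=
  ∫ u : V3, ∫ ω : Metric.sphere (0 : V3) 1, Bker γ q₀ u v ω * gMaxw u ∂sphMeasure

/-- The Boltzmann collision operator `Q(G,F)`. -/
def Qop (γ : ℝ) (q₀ : ℝ → ℝ) (G F : V3 → ℝ) (v : V3) : ℝ :=
  ∫ u : V3, ∫ ω : Metric.sphere (0 : V3) 1,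
    Bker γ q₀ u v ω * (G (uPost u v ω) * F (vPost u v ω) - G u * F v) ∂sphMeasure

/-- Gain part `K₂ g` of the linearized operator. -/
def Kgain (γ : ℝ) (q₀ : ℝ → ℝ) (g : V3 → ℝ) (v : V3) : ℝ :=
  ∫ u : V3, ∫ ω : Metric.sphere (0 : V3) 1,
    Bker γ q₀ u v ω * Real.sqrt (gMaxw u) *
      (Real.sqrt (gMaxw (vPost u v ω)) * g (uPost u v ω)
        + Real.sqrt (gMaxw (uPost u v ω)) * g (vPost u v ω)) ∂sphMeasure

/-- Loss part `K₁ g` of the linearized operator. -/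
def Kloss (γ : ℝ) (q₀ : ℝ → ℝ) (g : V3 → ℝ) (v : V3) : ℝ :=
  ∫ u : V3, ∫ ω : Metric.sphere (0 : V3) 1,
    Bker γ q₀ u v ω * Real.sqrt (gMaxw u) * Real.sqrt (gMaxw v) * g u ∂sphMeasure

/-- The integral operator `K = K₂ - K₁`. -/
def Kop (γ : ℝ) (q₀ : ℝ → ℝ) (g : V3 → ℝ) (v : V3) : ℝ := Kgain γ q₀ g v - Kloss γ q₀ g v

/-- The nonlinear gain term `Γ₊(g,f)`. -/
def GammaPlus (γ : ℝ) (q₀ : ℝ → ℝ) (g f : V3 → ℝ) (v : V3) : ℝ :=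
  ∫ u : V3, ∫ ω : Metric.sphere (0 : V3) 1,
    Bker γ q₀ u v ω * Real.sqrt (gMaxw u) * g (uPost u v ω) * f (vPost u v ω) ∂sphMeasure

/-- The nonlinear loss term `Γ₋(g,f)`. -/
def GammaMinus (γ : ℝ) (q₀ : ℝ → ℝ) (g f : V3 → ℝ) (v : V3) : ℝ :=
  f v * ∫ u : V3, ∫ ω : Metric.sphere (0 : V3) 1,
    Bker γ q₀ u v ω * Real.sqrt (gMaxw u) * g u ∂sphMeasure

/-- The time-dependent velocity weight `w_{q,ϑ,β}(v,t)`. -/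
def wgt (q ϑ β : ℝ) (v : V3) (t : ℝ) : ℝ :=
  (1 + ‖v‖ ^ 2) ^ β * Real.exp (q / 8 * (1 + (1 + t) ^ (-ϑ)) * ‖v‖ ^ 2)

/-- The time-modified collision frequency `ν̃(v,t)`. -/
def nuTilde (γ q ϑ : ℝ) (q₀ : ℝ → ℝ) (v : V3) (t : ℝ) : ℝ :=
  nuColl γ q₀ v + ϑ * q * ‖v‖ ^ 2 / (8 * (1 + t) ^ (ϑ + 1))

/-- Free transport on the torus: `x - s v`. -/
def shiftT (x : T3) (s : ℝ) (v : V3) : T3 := fun i => x i - ((s * v i : ℝ) : AddCircle (1 : ℝ))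

/-- `x + s v` on the torus. -/
def addT (x : T3) (s : ℝ) (v : V3) : T3 := fun i => x i + ((s * v i : ℝ) : AddCircle (1 : ℝ))

/-- `L^∞` norm (in `ℝ≥0∞`) on `𝕋³ × ℝ³`. -/
def linfXV (g : T3 → V3 → ℝ) : ℝ≥0∞ :=
  eLpNorm (fun p : T3 × V3 => g p.1 p.2) ⊤ volume

/-- `L^∞` norm (as a real number) on `𝕋³ × ℝ³`. -/
def linfXVr (g : T3 → V3 → ℝ) : ℝ := (linfXV g).toReal

/-- The relative entropy `ℰ(F)`. -/
def relEntropy (F : T3 → V3 → ℝ) : ℝ :=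
  ∫ x : T3, ∫ v : V3,
    (F x v / gMaxw v * Real.log (F x v / gMaxw v) - F x v / gMaxw v + 1) * gMaxw v

/-- `h = w f` is a mild solution of the perturbed Boltzmann equation on the time
interval `[0,T]` (Duhamel identity along characteristics). -/
def IsMildSolutionOn (γ q ϑ β : ℝ) (q₀ : ℝ → ℝ) (f : ℝ → T3 → V3 → ℝ) (T : ℝ) : Prop :=
  ∀ t : ℝ, 0 ≤ t → t ≤ T → ∀ᵐ p : T3 × V3,
    wgt q ϑ β p.2 t * f t p.1 p.2 =
      Real.exp (-(∫ τ in (0 : ℝ)..t, nuTilde γ q ϑ q₀ p.2 τ)) *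
          (wgt q ϑ β p.2 0 * f 0 (shiftT p.1 t p.2) p.2)
      + ∫ s in (0 : ℝ)..t,
          Real.exp (-(∫ τ in s..t, nuTilde γ q ϑ q₀ p.2 τ)) *
            (wgt q ϑ β p.2 s *
              (Kop γ q₀ (f s (shiftT p.1 (t - s) p.2)) p.2
                + GammaPlus γ q₀ (f s (shiftT p.1 (t - s) p.2))
                    (f s (shiftT p.1 (t - s) p.2)) p.2
                - GammaMinus γ q₀ (f s (shiftT p.1 (t - s) p.2))
                    (f s (shiftT p.1 (t - s) p.2)) p.2))

/-- `h = w f` is a global-in-time mild solution of the perturbed Boltzmann equation. -/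
def IsMildSolution (γ q ϑ β : ℝ) (q₀ : ℝ → ℝ) (f : ℝ → T3 → V3 → ℝ) : Prop :=
  ∀ T : ℝ, 0 ≤ T → IsMildSolutionOn γ q ϑ β q₀ f T

/-! Write `η = v - u`, `r = |η|` and `p = v · η`, so that `|v|² - |u|² = 2p - r²`. Dividing the
weights, the Gaussian part of the integrand has exponent
`(q/8) a (2p - r²) - (s₀/8) (r² + (2p - r²)² / r²)` with `a ∈ [1, 2]`, a quadratic form in
`(r², p)` which for `q < s₀` is bounded by `-c (r² + |p|)`; the polynomial parts of the weights
and the factor `e^{ε r²}` only use up part of the `r²` decay (Peetre's inequality).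
It remains to see that `∫ |η|⁻¹ e^{-c₁ |η|² - c₂ |v · η|} dη = O((1 + |v|)⁻¹)`: rotating `v` onto
the first axis and using `|η|⁻¹ ≤ |η₂|^{-1/2} |η₃|^{-1/2}` splits it into one-dimensional
integrals, and the one along `v` is `O(min(1, 1/|v|))`. -/

open Set
open scoped RealInnerProductSpace

theorem MeasureTheory.IntegrableOn.integrable_comp_abs {f : ℝ → ℝ} (hf : IntegrableOn f (Ioi 0)) :
    Integrable fun x ↦ f |x| := by
  have hIoi : IntegrableOn (fun x ↦ f |x|) (Ioi 0) :=
    hf.congr_fun (fun x hx ↦ by rw [abs_of_pos hx]) measurableSet_Ioi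
  have hIic : IntegrableOn (fun x ↦ f |x|) (Iic 0) := by
    rw [← Measure.map_neg_eq_self (volume : Measure ℝ)]
    let m : MeasurableEmbedding fun x : ℝ ↦ -x := (Homeomorph.neg ℝ).measurableEmbedding
    rw [m.integrableOn_map_iff]
    simp_rw [Function.comp_def, abs_neg, neg_preimage, neg_Iic, neg_zero]
    exact (integrableOn_Ici_iff_integrableOn_Ioi).mpr hIoi
  rw [← integrableOn_univ, ← Iic_union_Ioi (a := (0 : ℝ))]
  exact hIic.union hIoi

theorem integrable_abs_rpow_mul_exp_neg_mul_sq {b s : ℝ} (hb : 0 < b) (hs : -1 < s) :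
    Integrable fun x : ℝ ↦ |x| ^ s * exp (-b * x ^ 2) := by
  simpa only [sq_abs] using (integrableOn_rpow_mul_exp_neg_mul_sq hb hs).integrable_comp_abs

theorem integral_abs_rpow_mul_exp_neg_mul_sq {b s : ℝ} (hb : 0 < b) (hs : -1 < s) :
    ∫ x : ℝ, |x| ^ s * exp (-b * x ^ 2) = b ^ (-(s + 1) / 2) * Gamma ((s + 1) / 2) := by
  have h := integral_rpow_mul_exp_neg_mul_rpow two_pos hs hb
  simp_rw [rpow_two] at h
  calc ∫ x : ℝ, |x| ^ s * exp (-b * x ^ 2) = ∫ x : ℝ, |x| ^ s * exp (-b * |x| ^ 2) := by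
        simp_rw [sq_abs]
    _ = 2 * ∫ x in Ioi (0 : ℝ), x ^ s * exp (-b * x ^ 2) :=
        integral_comp_abs (f := fun x ↦ x ^ s * exp (-b * x ^ 2))
    _ = _ := by rw [h]; ring

section GaussianLaplace

variable {c k : ℝ}

theorem integrable_exp_neg_mul_sq_sub_mul_abs (hc : 0 < c) (hk : 0 ≤ k) :
    Integrable fun x : ℝ ↦ exp (-c * x ^ 2 - k * |x|) := by
  refine (integrable_exp_neg_mul_sq hc).mono' (by fun_prop) (ae_of_all _ fun x ↦ ?_)
  rw [norm_of_nonneg (exp_nonneg _)]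
  gcongr
  nlinarith [abs_nonneg x]

theorem integral_exp_neg_mul_sq_sub_mul_abs_le (hc : 0 < c) (hk : 0 ≤ k) :
    ∫ x : ℝ, exp (-c * x ^ 2 - k * |x|) ≤ √(π / c) := by
  rw [← integral_gaussian]
  refine integral_mono (integrable_exp_neg_mul_sq_sub_mul_abs hc hk)
    (integrable_exp_neg_mul_sq hc) fun x ↦ ?_
  gcongr
  nlinarith [abs_nonneg x]

theorem mul_integral_exp_neg_mul_sq_sub_mul_abs_le (hc : 0 < c) (hk : 0 ≤ k) :
    k * ∫ x : ℝ, exp (-c * x ^ 2 - k * |x|) ≤ 2 := by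
  rcases hk.eq_or_lt with rfl | hk
  · simp
  have h_half : ∫ x in Ioi (0 : ℝ), exp (-c * x ^ 2 - k * x) ≤ k⁻¹ := by
    calc ∫ x in Ioi (0 : ℝ), exp (-c * x ^ 2 - k * x)
        ≤ ∫ x in Ioi (0 : ℝ), exp (-k * x) :=
          integral_mono_of_nonneg (ae_of_all _ fun x ↦ (exp_pos _).le)
            (exp_neg_integrableOn_Ioi 0 hk) (ae_of_all _ fun x ↦ by
              dsimp only; gcongr; nlinarith [sq_nonneg x])
      _ = k⁻¹ := by rw [integral_exp_mul_Ioi (by linarith)]; simp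
  calc k * ∫ x : ℝ, exp (-c * x ^ 2 - k * |x|)
      = k * ∫ x : ℝ, exp (-c * |x| ^ 2 - k * |x|) := by simp_rw [sq_abs]
    _ = k * (2 * ∫ x in Ioi (0 : ℝ), exp (-c * x ^ 2 - k * x)) := by
        rw [integral_comp_abs (f := fun x ↦ exp (-c * x ^ 2 - k * x))]
    _ ≤ k * (2 * k⁻¹) := by gcongr
    _ = 2 := by field_simp

end GaussianLaplace

theorem EuclideanSpace.exists_linearIsometryEquiv_inner_apply {ι : Type*} [Fintype ι]
    [DecidableEq ι] (v : EuclideanSpace ℝ ι) (i : ι) :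
    ∃ R : EuclideanSpace ℝ ι ≃ₗᵢ[ℝ] EuclideanSpace ℝ ι, ∀ x, ⟪v, R x⟫ = ‖v‖ * x i := by
  set w := EuclideanSpace.single i ‖v‖
  have hw : ‖w‖ = ‖v‖ := by simp [w]
  refine ⟨(ℝ ∙ (w - v))ᗮ.reflection, fun x ↦ ?_⟩
  calc ⟪v, (ℝ ∙ (w - v))ᗮ.reflection x⟫
      = ⟪(ℝ ∙ (w - v))ᗮ.reflection w, (ℝ ∙ (w - v))ᗮ.reflection x⟫ := by
        rw [Submodule.reflection_sub hw]
    _ = ‖v‖ * x i := by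
        rw [LinearIsometryEquiv.inner_map_map, EuclideanSpace.inner_single_left]; simp

theorem EuclideanSpace.exists_measurePreserving_inner_apply {ι : Type*} [Fintype ι]
    [DecidableEq ι] (v : EuclideanSpace ℝ ι) (i : ι) :
    ∃ φ : (ι → ℝ) ≃ᵐ EuclideanSpace ℝ ι, MeasurePreserving φ ∧
      ∀ y, ‖φ y‖ ^ 2 = ∑ j, y j ^ 2 ∧ ⟪v, φ y⟫ = ‖v‖ * y i := by
  obtain ⟨R, hR⟩ := exists_linearIsometryEquiv_inner_apply v i
  refine ⟨(MeasurableEquiv.toLp 2 (ι → ℝ)).trans R.toHomeomorph.toMeasurableEquiv,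
    (PiLp.volume_preserving_toLp ι).trans R.measurePreserving, fun y ↦ ⟨?_, ?_⟩⟩
  · simp [EuclideanSpace.real_norm_sq_eq]
  · simp [hR]

theorem inv_le_abs_rpow_neg_half_mul_abs_rpow_neg_half {r a b : ℝ} (hr : 0 ≤ r) (ha : a ≠ 0)
    (hb : b ≠ 0) (h : a ^ 2 + b ^ 2 ≤ r ^ 2) :
    r⁻¹ ≤ |a| ^ (-(1 / 2) : ℝ) * |b| ^ (-(1 / 2) : ℝ) := by
  have hab : 0 < |a| * |b| := by positivity
  have hle : √(|a| * |b|) ≤ r := by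
    rw [← sqrt_sq hr]
    exact sqrt_le_sqrt (by nlinarith [sq_nonneg (|a| - |b|), sq_abs a, sq_abs b])
  rw [← mul_rpow (abs_nonneg a) (abs_nonneg b), rpow_neg hab.le, ← sqrt_eq_rpow]
  exact inv_anti₀ (sqrt_pos.2 hab) hle

def majorantFactor (c k : ℝ) : Fin 3 → ℝ → ℝ :=
  ![fun x ↦ exp (-c * x ^ 2 - k * |x|), fun x ↦ |x| ^ (-(1 / 2) : ℝ) * exp (-c * x ^ 2),
    fun x ↦ |x| ^ (-(1 / 2) : ℝ) * exp (-c * x ^ 2)]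

theorem integrable_prod_majorantFactor {c k : ℝ} (hc : 0 < c) (hk : 0 ≤ k) :
    Integrable fun y : Fin 3 → ℝ ↦ ∏ j, majorantFactor c k j (y j) := by
  refine Integrable.fintype_prod_dep fun j ↦ ?_
  fin_cases j
  · exact integrable_exp_neg_mul_sq_sub_mul_abs hc hk
  all_goals exact integrable_abs_rpow_mul_exp_neg_mul_sq hc (by norm_num)

theorem integral_prod_majorantFactor {c k : ℝ} (hc : 0 < c) :
    ∫ y : Fin 3 → ℝ, ∏ j, majorantFactor c k j (y j)
      = (∫ x, exp (-c * x ^ 2 - k * |x|)) * (c ^ (-(1 / 4) : ℝ) * Gamma (1 / 4)) ^ 2 := by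
  rw [integral_fintype_prod_volume_eq_prod, Fin.prod_univ_three]
  simp only [majorantFactor, Matrix.cons_val_zero, Matrix.cons_val_one, Matrix.cons_val_two,
    Matrix.head_cons, Matrix.tail_cons]
  rw [integral_abs_rpow_mul_exp_neg_mul_sq hc (by norm_num)]
  norm_num
  ring

theorem majorant_le_prod_majorantFactor {c k r : ℝ} (hr : 0 ≤ r) {y : Fin 3 → ℝ}
    (hy₁ : y 1 ≠ 0) (hy₂ : y 2 ≠ 0) (hry : r ^ 2 = ∑ j, y j ^ 2) :
    r⁻¹ * exp (-c * r ^ 2 - k * |y 0|) ≤ ∏ j, majorantFactor c k j (y j) := by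
  rw [Fin.sum_univ_three] at hry
  have hinv := inv_le_abs_rpow_neg_half_mul_abs_rpow_neg_half hr hy₁ hy₂
    (by linarith [sq_nonneg (y 0)])
  have hexp : exp (-c * r ^ 2 - k * |y 0|)
      = exp (-c * y 0 ^ 2 - k * |y 0|) * exp (-c * y 1 ^ 2) * exp (-c * y 2 ^ 2) := by
    rw [← exp_add, ← exp_add, hry]; ring_nf
  simp only [Fin.prod_univ_three, majorantFactor, Matrix.cons_val_zero, Matrix.cons_val_one,
    Matrix.cons_val_two, Matrix.head_cons, Matrix.tail_cons]
  rw [hexp]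
  calc r⁻¹ * (exp (-c * y 0 ^ 2 - k * |y 0|) * exp (-c * y 1 ^ 2) * exp (-c * y 2 ^ 2))
      ≤ (|y 1| ^ (-(1 / 2) : ℝ) * |y 2| ^ (-(1 / 2) : ℝ))
          * (exp (-c * y 0 ^ 2 - k * |y 0|) * exp (-c * y 1 ^ 2) * exp (-c * y 2 ^ 2)) := by
        gcongr
    _ = _ := by ring

/-- Majorant of the weighted gain kernel as a function of `η = v - u`. -/
def gainMajorant (c₁ c₂ : ℝ) (v η : V3) : ℝ := ‖η‖⁻¹ * exp (-c₁ * ‖η‖ ^ 2 - c₂ * |⟪v, η⟫|)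

section gainMajorant

variable {c₁ c₂ : ℝ}

theorem gainMajorant_nonneg (v η : V3) : 0 ≤ gainMajorant c₁ c₂ v η := by
  unfold gainMajorant; positivity

theorem measurable_gainMajorant (v : V3) : Measurable (gainMajorant c₁ c₂ v) := by
  unfold gainMajorant; fun_prop

theorem exists_measurePreserving_gainMajorant_le (v : V3) :
    ∃ φ : (Fin 3 → ℝ) ≃ᵐ V3, MeasurePreserving φ ∧
      ∀ᵐ y, gainMajorant c₁ c₂ v (φ y) ≤ ∏ j, majorantFactor c₁ (c₂ * ‖v‖) j (y j) := by
  obtain ⟨φ, hφ, hφy⟩ := EuclideanSpace.exists_measurePreserving_inner_apply v 0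
  refine ⟨φ, hφ, ?_⟩
  have hne : ∀ i, ∀ᵐ y : Fin 3 → ℝ, y i ≠ 0 := fun i ↦ by
    rw [volume_pi]; exact Measure.ae_eval_ne _ i 0
  filter_upwards [hne 1, hne 2] with y hy₁ hy₂
  obtain ⟨hnorm, hinner⟩ := hφy y
  rw [gainMajorant, hinner, abs_mul, abs_norm, ← mul_assoc]
  exact majorant_le_prod_majorantFactor (norm_nonneg _) hy₁ hy₂ hnorm

theorem integrable_gainMajorant (hc₁ : 0 < c₁) (hc₂ : 0 ≤ c₂) (v : V3) :
    Integrable (gainMajorant c₁ c₂ v) := by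
  obtain ⟨φ, hφ, hle⟩ := exists_measurePreserving_gainMajorant_le (c₁ := c₁) (c₂ := c₂) v
  rw [← hφ.integrable_comp_emb φ.measurableEmbedding]
  refine (integrable_prod_majorantFactor hc₁ (mul_nonneg hc₂ (norm_nonneg v))).mono'
    ((measurable_gainMajorant v).comp φ.measurable).aestronglyMeasurable ?_
  filter_upwards [hle] with y hy
  rwa [Function.comp_apply, norm_of_nonneg (gainMajorant_nonneg v _)]

theorem one_add_norm_mul_integral_gainMajorant_le (hc₁ : 0 < c₁) (hc₂ : 0 < c₂) (v : V3) :
    (1 + ‖v‖) * ∫ η, gainMajorant c₁ c₂ v η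
      ≤ (√(π / c₁) + 2 / c₂) * (c₁ ^ (-(1 / 4) : ℝ) * Gamma (1 / 4)) ^ 2 := by
  obtain ⟨φ, hφ, hle⟩ := exists_measurePreserving_gainMajorant_le (c₁ := c₁) (c₂ := c₂) v
  set I := ∫ x, exp (-c₁ * x ^ 2 - c₂ * ‖v‖ * |x|)
  have hI : (1 + ‖v‖) * I ≤ √(π / c₁) + 2 / c₂ := by
    have h₀ := integral_exp_neg_mul_sq_sub_mul_abs_le hc₁ (by positivity : 0 ≤ c₂ * ‖v‖)
    have h₁ := mul_integral_exp_neg_mul_sq_sub_mul_abs_le hc₁ (by positivity : 0 ≤ c₂ * ‖v‖)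
    rw [mul_assoc, ← le_div_iff₀' hc₂] at h₁
    linarith
  have hbound : ∫ η, gainMajorant c₁ c₂ v η ≤ I * (c₁ ^ (-(1 / 4) : ℝ) * Gamma (1 / 4)) ^ 2 := by
    rw [← hφ.integral_comp' (gainMajorant c₁ c₂ v), ← integral_prod_majorantFactor hc₁]
    exact integral_mono_of_nonneg (ae_of_all _ fun y ↦ gainMajorant_nonneg v _)
      (integrable_prod_majorantFactor (k := c₂ * ‖v‖) hc₁ (by positivity)) hle
  calc (1 + ‖v‖) * ∫ η, gainMajorant c₁ c₂ v η
      ≤ (1 + ‖v‖) * (I * (c₁ ^ (-(1 / 4) : ℝ) * Gamma (1 / 4)) ^ 2) := by gcongr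
    _ ≤ _ := by rw [← mul_assoc]; gcongr

end gainMajorant

theorem exists_one_add_rpow_le_mul_exp {β c : ℝ} (hβ : 0 ≤ β) (hc : 0 < c) :
    ∃ M, 0 < M ∧ ∀ x : ℝ, 0 ≤ x → (1 + x) ^ β ≤ M * exp (c * x) := by
  set k := max 1 (β / c)
  have hk : 1 ≤ k := le_max_left _ _
  have hβk : β ≤ c * k := by
    have := le_max_right 1 (β / c)
    rwa [div_le_iff₀' hc] at this
  refine ⟨k ^ β, by positivity, fun x hx ↦ ?_⟩
  have hlin : 1 + x ≤ k * exp (x / k) := by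
    calc 1 + x ≤ k * (x / k + 1) := by field_simp; linarith
      _ ≤ k * exp (x / k) := by gcongr; exact add_one_le_exp _
  calc (1 + x) ^ β ≤ (k * exp (x / k)) ^ β := by gcongr
    _ = k ^ β * exp (β / k * x) := by
        rw [mul_rpow (by positivity) (exp_nonneg _), ← exp_mul]; ring_nf
    _ ≤ k ^ β * exp (c * x) := by
        gcongr
        rwa [div_le_iff₀ (by positivity)]

theorem one_add_norm_sq_le {E : Type*} [SeminormedAddCommGroup E] (u v : E) :
    1 + ‖v‖ ^ 2 ≤ 2 * (1 + ‖v - u‖ ^ 2) * (1 + ‖u‖ ^ 2) := by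
  have h : ‖v‖ ^ 2 ≤ (‖u‖ + ‖v - u‖) ^ 2 :=
    pow_le_pow_left₀ (norm_nonneg v) (norm_le_norm_add_norm_sub' v u) 2
  nlinarith [sq_nonneg (‖u‖ - ‖v - u‖), mul_nonneg (sq_nonneg ‖v - u‖) (sq_nonneg ‖u‖)]

theorem wgt_pos (q ϑ β : ℝ) (v : V3) (t : ℝ) : 0 < wgt q ϑ β v t := by
  unfold wgt; positivity

theorem wgt_mul_inv_wgt_le {q ϑ β : ℝ} (hβ : 0 ≤ β) (u v : V3) (t : ℝ) :
    wgt q ϑ β v t * (wgt q ϑ β u t)⁻¹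
      ≤ 2 ^ β * (1 + ‖v - u‖ ^ 2) ^ β
          * exp (q / 8 * (1 + (1 + t) ^ (-ϑ)) * (‖v‖ ^ 2 - ‖u‖ ^ 2)) := by
  have hu : 0 < (1 + ‖u‖ ^ 2) ^ β := by positivity
  have hpoly : (1 + ‖v‖ ^ 2) ^ β ≤ 2 ^ β * (1 + ‖v - u‖ ^ 2) ^ β * (1 + ‖u‖ ^ 2) ^ β := by
    rw [← mul_rpow (by positivity) (by positivity), ← mul_rpow (by positivity) (by positivity)]
    exact rpow_le_rpow (by positivity) (one_add_norm_sq_le u v) hβ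
  calc wgt q ϑ β v t * (wgt q ϑ β u t)⁻¹
      = (1 + ‖v‖ ^ 2) ^ β / (1 + ‖u‖ ^ 2) ^ β
          * exp (q / 8 * (1 + (1 + t) ^ (-ϑ)) * (‖v‖ ^ 2 - ‖u‖ ^ 2)) := by
        rw [wgt, wgt, mul_sub, exp_sub]; field_simp
    _ ≤ _ := by gcongr; rwa [div_le_iff₀ hu]

theorem abs_one_add_rpow_neg_le_two {t ϑ : ℝ} (ht : 0 ≤ t) (hϑ : 0 ≤ ϑ) :
    |1 + (1 + t) ^ (-ϑ)| ≤ 2 := by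
  have h₀ : 0 ≤ (1 + t) ^ (-ϑ) := by positivity
  have h₁ : (1 + t) ^ (-ϑ) ≤ 1 := rpow_le_one_of_one_le_of_nonpos (by linarith) (by linarith)
  rw [abs_of_nonneg (by linarith)]
  linarith

theorem quadratic_exponent_le {q s a r p : ℝ} (hq : 0 ≤ q) (hqs : q ≤ s) (ha : |a| ≤ 2)
    (hr : 0 < r) :
    q / 8 * a * (2 * p - r ^ 2) - s / 8 * r ^ 2 - s / 8 * (2 * p - r ^ 2) ^ 2 / r ^ 2
      ≤ -((s - q) / 32) * r ^ 2 - (s - q) / 8 * |p| := by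
  set d := 2 * p - r ^ 2 with hd
  have hr2 : 0 < r ^ 2 := by positivity
  have had : a * d ≤ 2 * |d| := by
    calc a * d ≤ |a| * |d| := by rw [← abs_mul]; exact le_abs_self _
      _ ≤ 2 * |d| := by gcongr
  have hamgm : 2 * |d| * r ^ 2 ≤ r ^ 4 + d ^ 2 := by
    nlinarith [sq_nonneg (|d| - r ^ 2), sq_abs d]
  -- For `p ≥ 0` this reads `r⁴ (7/4 - 5 X + 4 X²) ≥ 0` with `X = p / r²`: negative discriminant.
  have hdisc : r ^ 4 / 4 + |p| * r ^ 2 ≤ r ^ 4 + d ^ 2 := by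
    rcases le_total 0 p with hp | hp
    · rw [abs_of_nonneg hp]; nlinarith [sq_nonneg (p - 5 / 8 * r ^ 2)]
    · rw [abs_of_nonpos hp]; nlinarith [sq_nonneg p]
  rw [← sub_nonneg]
  have key : -((s - q) / 32) * r ^ 2 - (s - q) / 8 * |p|
      - (q / 8 * a * d - s / 8 * r ^ 2 - s / 8 * d ^ 2 / r ^ 2)
      = ((s - q) * (r ^ 4 + d ^ 2 - r ^ 4 / 4 - |p| * r ^ 2)
          + q * (r ^ 4 + d ^ 2 - a * d * r ^ 2)) / (8 * r ^ 2) := by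
    field_simp; ring
  rw [key]
  have h₁ : 0 ≤ (s - q) * (r ^ 4 + d ^ 2 - r ^ 4 / 4 - |p| * r ^ 2) :=
    mul_nonneg (by linarith) (by linarith)
  have h₂ : 0 ≤ q * (r ^ 4 + d ^ 2 - a * d * r ^ 2) :=
    mul_nonneg hq (by nlinarith)
  positivity

theorem kernel_exponent_le {E : Type*} [NormedAddCommGroup E] [InnerProductSpace ℝ E]
    {q s a : ℝ} (hq : 0 ≤ q) (hqs : q ≤ s) (ha : |a| ≤ 2) {u v : E} (huv : v ≠ u) :
    q / 8 * a * (‖v‖ ^ 2 - ‖u‖ ^ 2) - s / 8 * ‖v - u‖ ^ 2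
        - s / 8 * (‖v‖ ^ 2 - ‖u‖ ^ 2) ^ 2 / ‖v - u‖ ^ 2
      ≤ -((s - q) / 32) * ‖v - u‖ ^ 2 - (s - q) / 8 * |⟪v, v - u⟫| := by
  have hd : ‖v‖ ^ 2 - ‖u‖ ^ 2 = 2 * ⟪v, v - u⟫ - ‖v - u‖ ^ 2 := by
    have h := norm_sub_sq_real v (v - u)
    rw [sub_sub_cancel] at h
    linarith
  rw [hd]
  exact quadratic_exponent_le hq hqs ha (norm_pos_iff.2 (sub_ne_zero.2 huv))

theorem wgt_mul_kernel_le {q ϑ β s₀ ε M t : ℝ} (hβ : 0 ≤ β) (hϑ : 0 ≤ ϑ) (hq : 0 ≤ q)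
    (hqs : q ≤ s₀) (hε : ε ≤ (s₀ - q) / 64)
    (hM : ∀ x : ℝ, 0 ≤ x → (1 + x) ^ β ≤ M * exp ((s₀ - q) / 128 * x)) (ht : 0 ≤ t)
    (u v : V3) :
    wgt q ϑ β v t * (‖v - u‖⁻¹ *
        exp (-(s₀ / 8) * ‖v - u‖ ^ 2 - s₀ / 8 * (‖v‖ ^ 2 - ‖u‖ ^ 2) ^ 2 / ‖v - u‖ ^ 2) *
        exp (ε * ‖v - u‖ ^ 2) * (wgt q ϑ β u t)⁻¹)
      ≤ 2 ^ β * M * gainMajorant ((s₀ - q) / 128) ((s₀ - q) / 8) v (v - u) := by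
  rcases eq_or_ne v u with rfl | huv
  · simp [gainMajorant]
  have hM₀ : 0 ≤ M := by
    have := hM 0 le_rfl
    norm_num at this
    linarith
  set r := ‖v - u‖
  set a := 1 + (1 + t) ^ (-ϑ)
  set d := ‖v‖ ^ 2 - ‖u‖ ^ 2
  have hexp := kernel_exponent_le hq hqs (abs_one_add_rpow_neg_le_two ht hϑ) huv
  have hεr : ε * r ^ 2 ≤ (s₀ - q) / 64 * r ^ 2 := by gcongr
  calc wgt q ϑ β v t * (r⁻¹ * exp (-(s₀ / 8) * r ^ 2 - s₀ / 8 * d ^ 2 / r ^ 2) *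
        exp (ε * r ^ 2) * (wgt q ϑ β u t)⁻¹)
      = wgt q ϑ β v t * (wgt q ϑ β u t)⁻¹
          * (r⁻¹ * exp (-(s₀ / 8) * r ^ 2 - s₀ / 8 * d ^ 2 / r ^ 2 + ε * r ^ 2)) := by
        rw [exp_add]; ring
    _ ≤ 2 ^ β * (1 + r ^ 2) ^ β * exp (q / 8 * a * d)
          * (r⁻¹ * exp (-(s₀ / 8) * r ^ 2 - s₀ / 8 * d ^ 2 / r ^ 2 + ε * r ^ 2)) :=
        mul_le_mul_of_nonneg_right (wgt_mul_inv_wgt_le hβ u v t) (by positivity)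
    _ ≤ 2 ^ β * (M * exp ((s₀ - q) / 128 * r ^ 2)) * exp (q / 8 * a * d)
          * (r⁻¹ * exp (-(s₀ / 8) * r ^ 2 - s₀ / 8 * d ^ 2 / r ^ 2 + ε * r ^ 2)) := by
        gcongr; exact hM _ (sq_nonneg r)
    _ = 2 ^ β * M * (r⁻¹ * exp ((s₀ - q) / 128 * r ^ 2 + q / 8 * a * d
          + (-(s₀ / 8) * r ^ 2 - s₀ / 8 * d ^ 2 / r ^ 2 + ε * r ^ 2))) := by
        simp only [exp_add]; ring
    _ ≤ 2 ^ β * M * (r⁻¹ * exp (-((s₀ - q) / 128) * r ^ 2 - (s₀ - q) / 8 * |⟪v, v - u⟫|)) := by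
        gcongr; linarith
    _ = 2 ^ β * M * gainMajorant ((s₀ - q) / 128) ((s₀ - q) / 8) v (v - u) := rfl

theorem stmt9_weighted_cutoff_gain_general
    (β ϑ q s₀ : ℝ) (hβ : 0 ≤ β) (hϑ : 0 ≤ ϑ)
    (hq0 : 0 < q) (hqs : q < s₀) :
    ∃ ε₀ : ℝ, 0 < ε₀ ∧ ∀ ε : ℝ, 0 < ε → ε ≤ ε₀ →
      ∃ C : ℝ, 0 < C ∧ ∀ t : ℝ, 0 ≤ t → ∀ v : V3,
        wgt q ϑ β v t *
            (∫ u : V3, ‖v - u‖⁻¹ *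
              Real.exp (-(s₀ / 8) * ‖v - u‖ ^ 2
                - s₀ / 8 * (‖v‖ ^ 2 - ‖u‖ ^ 2) ^ 2 / ‖v - u‖ ^ 2) *
              Real.exp (ε * ‖v - u‖ ^ 2) * (wgt q ϑ β u t)⁻¹)
          ≤ C * (1 + ‖v‖)⁻¹ := by
  set c₁ := (s₀ - q) / 128
  set c₂ := (s₀ - q) / 8
  have hc₁ : 0 < c₁ := by positivity
  have hc₂ : 0 < c₂ := by positivity
  obtain ⟨M, hM₀, hM⟩ := exists_one_add_rpow_le_mul_exp hβ hc₁
  refine ⟨(s₀ - q) / 64, by linarith, fun ε _ hε ↦ ?_⟩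
  set K := (√(π / c₁) + 2 / c₂) * (c₁ ^ (-(1 / 4) : ℝ) * Gamma (1 / 4)) ^ 2
  refine ⟨2 ^ β * M * K, by positivity, fun t ht v ↦ ?_⟩
  have hK : ∫ η, gainMajorant c₁ c₂ v η ≤ K * (1 + ‖v‖)⁻¹ := by
    rw [le_mul_inv_iff₀ (by positivity), mul_comm]
    exact one_add_norm_mul_integral_gainMajorant_le hc₁ hc₂ v
  rw [← integral_const_mul]
  calc _ ≤ ∫ u, 2 ^ β * M * gainMajorant c₁ c₂ v (v - u) :=
        integral_mono_of_nonneg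
          (ae_of_all _ fun u ↦ mul_nonneg (wgt_pos q ϑ β v t).le
            (by have := wgt_pos q ϑ β u t; positivity))
          (((integrable_gainMajorant hc₁ hc₂.le v).comp_sub_left v).const_mul _)
          (ae_of_all _ (wgt_mul_kernel_le hβ hϑ hq0.le hqs.le hε hM ht · v))
    _ = 2 ^ β * M * ∫ η, gainMajorant c₁ c₂ v η := by
        rw [integral_const_mul, integral_sub_left_eq_self]
    _ ≤ 2 ^ β * M * K * (1 + ‖v‖)⁻¹ := by
        rw [mul_assoc _ K]; gcongr

/-- core of the second estimate of Lemma 2.3: weighted integral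
estimate for the cut-off gain kernel. -/
theorem stmt9_weighted_cutoff_gain
    (β ϑ q s₀ : ℝ) (hβ : 0 ≤ β) (hϑ : 0 ≤ ϑ)
    (hq0 : 0 < q) (hqs : q < s₀) (hs₀ : s₀ < 1) :
    ∃ ε₀ : ℝ, 0 < ε₀ ∧ ∀ ε : ℝ, 0 < ε → ε ≤ ε₀ →
      ∃ C : ℝ, 0 < C ∧ ∀ t : ℝ, 0 ≤ t → ∀ v : V3,
        wgt q ϑ β v t *
            (∫ u : V3, ‖v - u‖⁻¹ *
              Real.exp (-(s₀ / 8) * ‖v - u‖ ^ 2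
                - s₀ / 8 * (‖v‖ ^ 2 - ‖u‖ ^ 2) ^ 2 / ‖v - u‖ ^ 2) *
              Real.exp (ε * ‖v - u‖ ^ 2) * (wgt q ϑ β u t)⁻¹)
          ≤ C * (1 + ‖v‖)⁻¹ :=
  stmt9_weighted_cutoff_gain_general β ϑ q s₀ hβ hϑ hq0 hqs

end
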